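/- If there is no surjection from a type C onto a type C', then the ordinal coded by the canonical tree on any well-ordering of C' is not equal (as a set) to the set coded by any tree of finite sequences over C. Contrapositive form used in the paper: if an ordinal α is coded by some suitable C-tree, then there is a surjection from C onto α (for infinite C). -/

import Mathlib

universe u

open Cardinal

/-- `τ` is a daughter of `σ` in the tree `T`: it extends `σ` by one entry. -/
def Daughter {C : Type u} (T : Set (List C)) (τ σ : List C) : Prop :=
  τ ∈ T ∧ ∃ c : C, τ = σ ++ [c]

/-- `T` is closed under initial segments. -/
def IsTree {C : Type u} (T : Set (List C)) : Prop :=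
  ∀ σ ∈ T, ∀ τ : List C, τ <+: σ → τ ∈ T

/-- Decoding of the nodes of a well-founded tree: a node decodes to the set of
decodings of its daughters. -/
noncomputable def decode {C : Type u} (T : Set (List C))
    (hwf : WellFounded (Daughter T)) : List C → PSet.{u} :=
  hwf.fix fun σ ih =>
    PSet.mk {c : C // σ ++ [c] ∈ T} fun c => ih (σ ++ [c.1]) ⟨c.2, c.1, rfl⟩

/-- The von Neumann set (as a pre-set) corresponding to an ordinal. -/
noncomputable def vNp : Ordinal.{u} → PSet.{u} :=
  Ordinal.lt_wf.fix (C := fun _ => PSet.{u}) fun o ih =>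
    PSet.mk o.ToType fun i =>
      ih (@Ordinal.typein o.ToType (· < ·) isWellOrder_lt i) (Ordinal.typein_lt_self i)

/-- The von Neumann ZF-set corresponding to an ordinal. -/
noncomputable def vN (o : Ordinal.{u}) : ZFSet.{u} := ZFSet.mk (vNp o)

/-! The sets `vN β` with `β < α` are members of `vN α` and pairwise distinct, since `∈` is
irreflexive. If the root of `T` decodes to `vN α`, each of them is the decoding of a daughter `[c]`
of the root, so `β ↦ c` is injective and `#α ≤ #C`: only the first level of the tree is needed. -/

theorem vNp_eq (o : Ordinal.{u}) :
    vNp o = PSet.mk o.ToType fun i =>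
      vNp (@Ordinal.typein o.ToType (· < ·) isWellOrder_lt i) :=
  Ordinal.lt_wf.fix_eq _ o

theorem vN_mem_vN {β o : Ordinal.{u}} (h : β < o) : vN β ∈ vN o := by
  have hβ : β < @Ordinal.type o.ToType (· < ·) isWellOrder_lt := by
    rwa [Ordinal.type_toType]
  obtain ⟨i, rfl⟩ := @Ordinal.typein_surj o.ToType (· < ·) isWellOrder_lt β hβ
  rw [vN, vN, vNp_eq o]
  exact ZFSet.mk_mem_iff.mpr (PSet.Mem.mk _ i)

theorem vN_injective : Function.Injective vN := by
  intro o o' h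
  by_contra hne
  rcases lt_or_gt_of_ne hne with hlt | hlt <;>
    exact ZFSet.mem_irrefl _ (h ▸ vN_mem_vN hlt)

theorem card_le_of_mk_eq_vN {ι : Type u} (f : ι → PSet.{u}) {o : Ordinal.{u}}
    (h : ZFSet.mk (PSet.mk ι f) = vN o) : o.card ≤ #ι := by
  have hmem : ∀ i : o.ToType, ∃ j : ι,
      ZFSet.mk (f j) = vN (@Ordinal.typein o.ToType (· < ·) isWellOrder_lt i) := by
    intro i
    have hi := vN_mem_vN (Ordinal.typein_lt_self i)
    rw [← h, vN, ZFSet.mk_mem_iff] at hi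
    obtain ⟨j, hj⟩ := hi
    exact ⟨j, Quotient.sound hj.symm⟩
  choose g hg using hmem
  have hg_inj : Function.Injective g := fun i i' hii' =>
    @Ordinal.typein_injective o.ToType (· < ·) isWellOrder_lt i i'
      (vN_injective (by rw [← hg i, ← hg i', hii']))
  calc o.card = #o.ToType := (mk_toType o).symm
    _ ≤ #ι := mk_le_of_injective hg_inj

theorem decode_eq {C : Type u} (T : Set (List C)) (hwf : WellFounded (Daughter T))
    (σ : List C) :
    decode T hwf σ = PSet.mk {c : C // σ ++ [c] ∈ T}
      fun c => decode T hwf (σ ++ [c.1]) :=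
  hwf.fix_eq _ σ

theorem card_le_of_coded_by_tree_general {C : Type u}
    (T : Set (List C))
    (hwf : WellFounded (Daughter T)) (α : Ordinal.{u})
    (hcode : ZFSet.mk (decode T hwf []) = vN α) :
    α.card ≤ #C := by
  rw [decode_eq] at hcode
  calc α.card ≤ #{c : C // [] ++ [c] ∈ T} := card_le_of_mk_eq_vN _ hcode
    _ ≤ #C := mk_subtype_le _

/-- If an ordinal `α` (as a von Neumann set) is coded by a suitable `C`-tree with `C`
infinite, then `#α ≤ #C`: hence no suitable `C`-tree codes an ordinal of cardinality
greater than `#C`. -/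
theorem card_le_of_coded_by_tree {C : Type u} [Infinite C]
    (T : Set (List C)) (hT : IsTree T) (hne : [] ∈ T)
    (hwf : WellFounded (Daughter T)) (α : Ordinal.{u})
    (hcode : ZFSet.mk (decode T hwf []) = vN α) :
    α.card ≤ #C :=
  card_le_of_coded_by_tree_general T hwf α hcode
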